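/- Suppose X, Y are complex numbers with Z := max(|X|, |Y|) > 0, that ∏_{j=1}^n |β_j| ≤ c_0 · Z^k, that i is an index (1 ≤ i ≤ n) with |β_i| = min_{1≤j≤n} |β_j|, and that Z ≥ c_{4i}. Then for every j ≠ i (1 ≤ j ≤ n) one has |β_j| ≥ (c_{1ij}/2) · Z. -/

import Mathlib

/-!
Eliminating `Y`, resp. `X`, between `β i` and `β j` bounds `(α j - α i) X` and `(α j - α i) Y`
linearly in `‖β i‖` and `‖β j‖`; this gives
`c₁ Z ≤ ‖β j‖ + max 1 (‖α j‖ / ‖α i‖) ‖β i‖ + c₃`.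
Minimality of `‖β i‖` gives `‖β i‖ ^ n ≤ c₀ Z ^ k`, so the middle term is at most
`c₂ Z ^ (k / n)`, which is `≤ ε c₁ Z / 2` as soon as `Z ≥ c₄`; likewise `c₃ ≤ (1 - ε) c₁ Z / 2`.
-/

open Finset

theorem Finset.inf'_pow_card_le_prod {ι R : Type*} [CommSemiring R] [LinearOrder R]
    [IsStrictOrderedRing R] (s : Finset ι) (hs : s.Nonempty) (f : ι → R)
    (hf : ∀ i ∈ s, 0 ≤ f i) : s.inf' hs f ^ s.card ≤ ∏ i ∈ s, f i := by
  rw [← prod_const]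
  exact prod_le_prod (fun _ _ ↦ (le_inf'_iff hs f).2 hf) fun i hi ↦ inf'_le f hi

namespace Real

theorem le_rpow_mul_rpow_of_pow_le_mul_pow {a c Z : ℝ} {n k : ℕ} (ha : 0 ≤ a) (hc : 0 ≤ c)
    (hZ : 0 ≤ Z) (hn : n ≠ 0) (h : a ^ n ≤ c * Z ^ k) :
    a ≤ c ^ ((1 : ℝ) / n) * Z ^ ((k : ℝ) / n) := by
  have hn' : (0 : ℝ) < n := by positivity
  calc a ≤ (c * Z ^ k) ^ (n : ℝ)⁻¹ :=
        (le_rpow_inv_iff_of_pos ha (by positivity) hn').2 (by rwa [rpow_natCast])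
    _ = c ^ ((1 : ℝ) / n) * Z ^ ((k : ℝ) / n) := by
        rw [mul_rpow hc (by positivity), ← rpow_natCast_mul hZ, one_div, div_eq_mul_inv]

theorem mul_rpow_le_of_rpow_le {b Z k n : ℝ} (hb : 0 ≤ b) (hZ : 0 ≤ Z) (hk : 0 ≤ k) (hkn : k < n)
    (h : b ^ (n / (n - k)) ≤ Z) : b * Z ^ (k / n) ≤ Z := by
  have hn : 0 < n := hk.trans_lt hkn
  have hb' : b ≤ Z ^ ((n - k) / n) := by
    rw [← inv_div]
    exact (le_rpow_inv_iff_of_pos hb hZ (div_pos hn (sub_pos.2 hkn))).2 h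
  calc b * Z ^ (k / n) ≤ Z ^ ((n - k) / n) * Z ^ (k / n) := by gcongr
    _ = Z := by
        rw [← rpow_add' hZ (by field_simp; simp [hn.ne']), ← add_div, sub_add_cancel,
          div_self hn.ne', rpow_one]

end Real

section LinearForms

variable {𝕜 : Type*} [NormedField 𝕜] (X Y a b μ ν : 𝕜)

theorem norm_sub_mul_le_norm_add_norm_add_norm :
    ‖b - a‖ * ‖Y‖ ≤ ‖X - b * Y + ν‖ + ‖X - a * Y + μ‖ + ‖ν - μ‖ := by
  have h : (b - a) * Y = (X - a * Y + μ) - (X - b * Y + ν) + (ν - μ) := by ring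
  calc ‖b - a‖ * ‖Y‖ = ‖(X - a * Y + μ) - (X - b * Y + ν) + (ν - μ)‖ := by rw [← h, norm_mul]
    _ ≤ ‖X - b * Y + ν‖ + ‖X - a * Y + μ‖ + ‖ν - μ‖ := by
        linarith [norm_add_le ((X - a * Y + μ) - (X - b * Y + ν)) (ν - μ),
          norm_sub_le (X - a * Y + μ) (X - b * Y + ν)]

theorem norm_sub_mul_le_norm_mul_add_norm_mul_add_norm :
    ‖b - a‖ * ‖X‖ ≤ ‖a‖ * ‖X - b * Y + ν‖ + ‖b‖ * ‖X - a * Y + μ‖ + ‖a * ν - b * μ‖ := by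
  have h : (b - a) * X = b * (X - a * Y + μ) - a * (X - b * Y + ν) + (a * ν - b * μ) := by ring
  calc ‖b - a‖ * ‖X‖ = ‖b * (X - a * Y + μ) - a * (X - b * Y + ν) + (a * ν - b * μ)‖ := by
        rw [← h, norm_mul]
    _ ≤ ‖a‖ * ‖X - b * Y + ν‖ + ‖b‖ * ‖X - a * Y + μ‖ + ‖a * ν - b * μ‖ := by
        linarith [norm_add_le (b * (X - a * Y + μ) - a * (X - b * Y + ν)) (a * ν - b * μ),
          norm_sub_le (b * (X - a * Y + μ)) (a * (X - b * Y + ν)),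
          norm_mul b (X - a * Y + μ), norm_mul a (X - b * Y + ν)]

theorem norm_sub_mul_max_le :
    ‖b - a‖ * min 1 (1 / ‖a‖) * max ‖X‖ ‖Y‖ ≤
      ‖X - b * Y + ν‖ + max 1 (‖b‖ / ‖a‖) * ‖X - a * Y + μ‖ +
        max ‖ν - μ‖ (‖a * ν - b * μ‖ / ‖a‖) := by
  rw [mul_max_of_nonneg _ _ (by positivity)]
  refine max_le ?_ ?_
  · rcases eq_or_ne a 0 with rfl | ha
    · simp only [norm_zero, div_zero, min_eq_right zero_le_one, mul_zero, zero_mul]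
      positivity
    calc ‖b - a‖ * min 1 (1 / ‖a‖) * ‖X‖ ≤ ‖b - a‖ * (1 / ‖a‖) * ‖X‖ := by
          gcongr
          exact min_le_right _ _
      _ = ‖b - a‖ * ‖X‖ / ‖a‖ := by ring
      _ ≤ (‖a‖ * ‖X - b * Y + ν‖ + ‖b‖ * ‖X - a * Y + μ‖ + ‖a * ν - b * μ‖) / ‖a‖ := by
          gcongr
          exact norm_sub_mul_le_norm_mul_add_norm_mul_add_norm X Y a b μ ν
      _ = ‖X - b * Y + ν‖ + ‖b‖ / ‖a‖ * ‖X - a * Y + μ‖ + ‖a * ν - b * μ‖ / ‖a‖ := by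
          field_simp
      _ ≤ _ := by gcongr <;> exact le_max_right _ _
  · calc ‖b - a‖ * min 1 (1 / ‖a‖) * ‖Y‖ ≤ ‖b - a‖ * ‖Y‖ := by
          gcongr
          exact mul_le_of_le_one_right (norm_nonneg _) (min_le_left _ _)
      _ ≤ ‖X - b * Y + ν‖ + ‖X - a * Y + μ‖ + ‖ν - μ‖ :=
          norm_sub_mul_le_norm_add_norm_add_norm X Y a b μ ν
      _ ≤ _ := by
          gcongr
          · exact le_mul_of_one_le_left (norm_nonneg _) (le_max_left _ _)
          · exact le_max_left _ _

end LinearForms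

/-- Estimate (15) of the paper: if `Z ≥ c₄ᵢ` then `|βⱼ| ≥ (c₁ᵢⱼ/2) Z` for all `j ≠ i`. -/
theorem stmt2 (n k : ℕ) (hn : 2 ≤ n) (hk : k < n)
    (α lam : Fin n → ℂ)
    (c0 : ℝ)
    (X Y : ℂ) (Z : ℝ) (hZ : Z = max (‖X‖) (‖Y‖))
    (β : Fin n → ℂ) (hβ : ∀ j, β j = X - α j * Y + lam j)
    (hprod : ∏ j, ‖β j‖ ≤ c0 * Z ^ k)
    (i : Fin n)
    (hmin : ‖β i‖
      = (univ : Finset (Fin n)).inf' ⟨i, mem_univ i⟩ (fun j => ‖β j‖))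
    (ε : ℝ) (hε0 : 0 < ε) (hε1 : ε < 1)
    (c1 c2 c3 : Fin n → ℝ)
    (hc1 : ∀ j, c1 j = ‖α j - α i‖ * min 1 (1 / ‖α i‖))
    (hc2 : ∀ j, c2 j = c0 ^ ((1 : ℝ) / n) * max 1 (‖α j‖ / ‖α i‖))
    (hc3 : ∀ j, c3 j = max (‖lam j - lam i‖)
      (‖α i * lam j - α j * lam i‖ / ‖α i‖))
    (hZ4 : (univ.erase i).sup'
        (by
          refine Finset.card_pos.mp ?_
          rw [Finset.card_erase_of_mem (Finset.mem_univ i), Finset.card_univ, Fintype.card_fin]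
          omega)
        (fun j => max ((2 * c2 j / (ε * c1 j)) ^ ((n : ℝ) / ((n : ℝ) - (k : ℝ))))
          (2 * c3 j / ((1 - ε) * c1 j))) ≤ Z) :
    ∀ j, j ≠ i → ‖β j‖ ≥ c1 j / 2 * Z := by
  intro j hji
  obtain ⟨hc4₂, hc4₃⟩ := max_le_iff.1 <|
    (le_sup' (fun j ↦ max _ _) (mem_erase.2 ⟨hji, mem_univ j⟩)).trans hZ4
  have hZ0 : 0 ≤ Z := hZ ▸ (norm_nonneg X).trans (le_max_left _ _)
  rcases (show 0 ≤ c1 j by rw [hc1]; positivity).eq_or_lt with hc1zero | hc1pos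
  · simp [← hc1zero]
  rcases hZ0.eq_or_lt with hZzero | hZpos
  · simp [← hZzero]
  have hβi : ‖β i‖ ^ n ≤ c0 * Z ^ k := by
    refine le_trans ?_ hprod
    simpa [← hmin] using
      univ.inf'_pow_card_le_prod ⟨i, mem_univ i⟩ (fun j ↦ ‖β j‖) fun j _ ↦ norm_nonneg _
  have hc0 : 0 ≤ c0 :=
    nonneg_of_mul_nonneg_left ((pow_nonneg (norm_nonneg _) n).trans hβi) (pow_pos hZpos k)
  have hβi' := Real.le_rpow_mul_rpow_of_pow_le_mul_pow (norm_nonneg _) hc0 hZ0 (by omega) hβi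
  have hc2j : c2 j * Z ^ ((k : ℝ) / n) ≤ ε * c1 j / 2 * Z := by
    have := Real.mul_rpow_le_of_rpow_le (by rw [hc2]; positivity) hZ0 (Nat.cast_nonneg k)
      (by exact_mod_cast hk) hc4₂
    rw [div_mul_eq_mul_div, div_le_iff₀ (by positivity)] at this
    linarith
  have hc3j : c3 j ≤ (1 - ε) * c1 j / 2 * Z := by
    rw [div_le_iff₀ (by nlinarith)] at hc4₃
    linarith
  have key := norm_sub_mul_max_le X Y (α i) (α j) (lam i) (lam j)
  rw [← hβ, ← hβ, ← hc1, ← hZ, ← hc3] at key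
  have hM : max 1 (‖α j‖ / ‖α i‖) * ‖β i‖ ≤ c2 j * Z ^ ((k : ℝ) / n) := by
    rw [hc2, mul_comm (c0 ^ _), mul_assoc]
    gcongr
  linarith
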